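/- arXiv:1304.3513 — 9 statements merged into one kernel-verified Lean document; each statement's English description precedes it below -/
import Mathlib

section
/- Let p and q be distinct primes, let n = p·q, and let k be a natural number with k ∣ p−1. Then for every unit y and u of ZMod n and every natural number m, one has (y^m · u^k)^((p−1)·(q−1)/k) = (y^((p−1)·(q−1)/k))^m in the unit group (ZMod n)ˣ. -/
/-- For `n = p*q` a product of distinct primes and `k ∣ p-1`, raising a Benaloh
ciphertext `y^m * u^k` to the power `(p-1)*(q-1)/k` kills the random mask:
`(y^m * u^k)^((p-1)*(q-1)/k) = (y^((p-1)*(q-1)/k))^m`. -/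
theorem benaloh_decrypt_exponent (p q : ℕ) (hp : p.Prime) (hq : q.Prime)
    (hpq : p ≠ q) (k : ℕ) (hk : k ∣ p - 1)
    (y u : (ZMod (p * q))ˣ) (m : ℕ) :
    (y ^ m * u ^ k) ^ ((p - 1) * (q - 1) / k) =
      (y ^ ((p - 1) * (q - 1) / k)) ^ m := by
  have hkdvd : k ∣ (p - 1) * (q - 1) := hk.mul_right _
  have hmul : k * ((p - 1) * (q - 1) / k) = (p - 1) * (q - 1) :=
    Nat.mul_div_cancel' hkdvd
  have hne : NeZero (p * q) := ⟨Nat.mul_ne_zero hp.ne_zero hq.ne_zero⟩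
  have hcard : Fintype.card (ZMod (p * q))ˣ = (p - 1) * (q - 1) := by
    rw [ZMod.card_units_eq_totient,
      Nat.totient_mul ((Nat.coprime_primes hp hq).mpr hpq),
      Nat.totient_prime hp, Nat.totient_prime hq]
  have hu : u ^ ((p - 1) * (q - 1)) = 1 := by
    rw [← hcard]; exact pow_card_eq_one
  calc (y ^ m * u ^ k) ^ ((p - 1) * (q - 1) / k)
      = (y ^ ((p - 1) * (q - 1) / k)) ^ m * (u ^ ((p - 1) * (q - 1) / k)) ^ k := by
        rw [mul_pow, ← pow_mul, ← pow_mul, ← pow_mul, ← pow_mul,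
          Nat.mul_comm m, Nat.mul_comm k]
    _ = (y ^ ((p - 1) * (q - 1) / k)) ^ m := by
        have h1 : (u ^ ((p - 1) * (q - 1) / k)) ^ k = 1 := by
          rw [← pow_mul, Nat.div_mul_cancel hkdvd, hu]
        rw [h1, mul_one]
end

section
/- Let p and q be distinct primes, let n = p·q, let k be a prime with k ∣ p−1, and let y be a unit of ZMod n with y^((p−1)·(q−1)/k) ≠ 1. Then for every unit u of ZMod n and every natural number m < k, the ciphertext z = y^m · u^k satisfies z^((p−1)·(q−1)/k) = 1 if and only if m = 0. -/
/-- Benaloh decryption detects the plaintext 0: for a message `m < k`, the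
ciphertext `z = y^m * u^k` satisfies `z^((p-1)*(q-1)/k) = 1` iff `m = 0`. -/
theorem benaloh_zero_test (p q : ℕ) (hp : p.Prime) (hq : q.Prime)
    (hpq : p ≠ q) (k : ℕ) (hkp : k.Prime) (hk : k ∣ p - 1)
    (y : (ZMod (p * q))ˣ) (hy : y ^ ((p - 1) * (q - 1) / k) ≠ 1)
    (u : (ZMod (p * q))ˣ) (m : ℕ) (hm : m < k) :
    (y ^ m * u ^ k) ^ ((p - 1) * (q - 1) / k) = 1 ↔ m = 0 := by
  haveI : NeZero (p * q) := ⟨Nat.mul_ne_zero hp.pos.ne' hq.pos.ne'⟩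
  haveI : Fact k.Prime := ⟨hkp⟩
  set e := (p - 1) * (q - 1) / k with he
  have hcop : Nat.Coprime p q := (Nat.coprime_primes hp hq).mpr hpq
  have hcard : Fintype.card (ZMod (p * q))ˣ = (p - 1) * (q - 1) := by
    rw [ZMod.card_units_eq_totient, Nat.totient_mul hcop, Nat.totient_prime hp,
      Nat.totient_prime hq]
  have hdvd : k ∣ (p - 1) * (q - 1) := hk.mul_right _
  have hke : k * e = (p - 1) * (q - 1) := Nat.mul_div_cancel' hdvd
  have hu : (u ^ k) ^ e = 1 := by
    rw [← pow_mul, hke, ← hcard, pow_card_eq_one]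
  have hyk : (y ^ e) ^ k = 1 := by
    rw [← pow_mul, he, Nat.div_mul_cancel hdvd, ← hcard, pow_card_eq_one]
  have hord : orderOf (y ^ e) = k := orderOf_eq_prime hyk hy
  have key : (y ^ m * u ^ k) ^ e = (y ^ e) ^ m := by
    rw [mul_pow, hu, mul_one, ← pow_mul, mul_comm m e, pow_mul]
  rw [key, ← orderOf_dvd_iff_pow_eq_one, hord]
  constructor
  · exact fun h => Nat.eq_zero_of_dvd_of_lt h hm
  · rintro rfl; exact dvd_zero k
end

section
/- Let p and q be distinct primes, let n = p·q, let k be a prime with k ∣ p−1, and let y be a unit of ZMod n with y^((p−1)·(q−1)/k) ≠ 1. If natural numbers a, b and units u, v of ZMod n satisfy y^a · u^k = y^b · v^k in (ZMod n)ˣ, then a ≡ b (mod k). -/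
/-- Algebraic core of ZK-CTR soundness: if two Benaloh ciphertexts
`y^a * u^k` and `y^b * v^k` coincide, then `a ≡ b (mod k)`. -/
theorem benaloh_soundness_mod (p q : ℕ) (hp : p.Prime) (hq : q.Prime)
    (hpq : p ≠ q) (k : ℕ) (hkp : k.Prime) (hk : k ∣ p - 1)
    (y : (ZMod (p * q))ˣ) (hy : y ^ ((p - 1) * (q - 1) / k) ≠ 1)
    (a b : ℕ) (u v : (ZMod (p * q))ˣ)
    (h : y ^ a * u ^ k = y ^ b * v ^ k) :
    a ≡ b [MOD k] := by
  have hn : NeZero (p * q) := ⟨Nat.mul_ne_zero hp.pos.ne' hq.pos.ne'⟩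
  have hcard : Fintype.card (ZMod (p * q))ˣ = (p - 1) * (q - 1) := by
    rw [ZMod.card_units_eq_totient,
      Nat.totient_mul ((Nat.coprime_primes hp hq).mpr hpq),
      Nat.totient_prime hp, Nat.totient_prime hq]
  set r := (p - 1) * (q - 1) / k with hr
  have hkd : k ∣ (p - 1) * (q - 1) := hk.mul_right _
  have hkr : k * r = (p - 1) * (q - 1) := Nat.mul_div_cancel' hkd
  have hall : ∀ w : (ZMod (p * q))ˣ, w ^ ((p - 1) * (q - 1)) = 1 := by
    intro w; rw [← hcard]; exact pow_card_eq_one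
  have hgk : (y ^ r) ^ k = 1 := by
    rw [← pow_mul, mul_comm r k, hkr]; exact hall y
  have hord : orderOf (y ^ r) = k := by
    rcases (Nat.dvd_prime hkp).mp (orderOf_dvd_of_pow_eq_one hgk) with h1 | h1
    · exact absurd (orderOf_eq_one_iff.mp h1) hy
    · exact h1
  have hg : (y ^ r) ^ a = (y ^ r) ^ b := by
    have := congrArg (· ^ r) h
    simp only [mul_pow, ← pow_mul] at this
    rw [hkr, hall u, hall v, mul_one, mul_one,
      mul_comm a r, mul_comm b r, pow_mul, pow_mul] at this
    exact this
  have := pow_eq_pow_iff_modEq.mp hg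
  rwa [hord] at this
end

section
/- Let p and q be distinct primes, let n = p·q, let k be a prime with k ∣ p−1, and let y be a unit of ZMod n with y^((p−1)·(q−1)/k) ≠ 1. If natural numbers a < k and b < k and units u, v of ZMod n satisfy y^a · u^k = y^b · v^k in (ZMod n)ˣ, then a = b. In other words, Benaloh encryption is injective on plaintexts in {0,…,k−1}, so decryption is well defined. -/
/-- Benaloh encryption is injective on plaintexts in `{0, …, k-1}`:
decryption is well defined. -/
theorem benaloh_plaintext_injective (p q : ℕ) (hp : p.Prime) (hq : q.Prime)
    (hpq : p ≠ q) (k : ℕ) (hkp : k.Prime) (hk : k ∣ p - 1)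
    (y : (ZMod (p * q))ˣ) (hy : y ^ ((p - 1) * (q - 1) / k) ≠ 1)
    (a b : ℕ) (ha : a < k) (hb : b < k) (u v : (ZMod (p * q))ˣ)
    (h : y ^ a * u ^ k = y ^ b * v ^ k) :
    a = b := by
  have hn : NeZero (p * q) := ⟨Nat.mul_ne_zero hp.pos.ne' hq.pos.ne'⟩
  have hcop : Nat.Coprime p q := (Nat.coprime_primes hp hq).mpr hpq
  have hcard : Fintype.card (ZMod (p * q))ˣ = (p - 1) * (q - 1) := by
    rw [ZMod.card_units_eq_totient, Nat.totient_mul hcop, Nat.totient_prime hp, Nat.totient_prime hq]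
  have hkdvd : k ∣ (p - 1) * (q - 1) := hk.mul_right _
  set r := (p - 1) * (q - 1) / k with hr
  have hkr : k * r = (p - 1) * (q - 1) := Nat.mul_div_cancel' hkdvd
  have hone : ∀ w : (ZMod (p * q))ˣ, w ^ ((p - 1) * (q - 1)) = 1 := by
    intro w
    rw [← hcard]
    exact pow_card_eq_one
  set z := y ^ r with hz
  have hrk : r * k = (p - 1) * (q - 1) := by rw [mul_comm]; exact hkr
  have hzk : z ^ k = 1 := by
    rw [hz, ← pow_mul, hrk]
    exact hone y
  have hord : orderOf z = k := by
    have hdvd : orderOf z ∣ k := orderOf_dvd_of_pow_eq_one hzk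
    rcases (Nat.Prime.eq_one_or_self_of_dvd hkp _ hdvd) with h1 | h1
    · exact absurd (orderOf_eq_one_iff.mp h1) hy
    · exact h1
  have hzab : z ^ a = z ^ b := by
    have h2 := congrArg (· ^ r) h
    simp only [mul_pow, ← pow_mul, hkr, hone u, hone v, mul_one] at h2
    rw [hz, ← pow_mul, ← pow_mul, mul_comm r a, mul_comm r b]
    exact h2
  have hmod : a ≡ b [MOD k] := by
    have := pow_eq_pow_iff_modEq.mp hzab
    rwa [hord] at this
  calc a = a % k := (Nat.mod_eq_of_lt ha).symm
    _ = b % k := hmod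
    _ = b := Nat.mod_eq_of_lt hb
end

section
/- Let p and q be distinct primes and let k be a prime with k ∣ p−1 and k ∤ q−1. Then there exists a unit y of ZMod (p·q) such that y^((p−1)·(q−1)/k) ≠ 1. In other words, a valid Benaloh public key element y always exists under the key-generation conditions. -/
/-- A valid Benaloh public key element always exists: if `k` is a prime with
`k ∣ p-1` and `k ∤ q-1`, then some unit `y` of `ZMod (p*q)` satisfies
`y^((p-1)*(q-1)/k) ≠ 1`. -/
theorem benaloh_key_exists (p q : ℕ) (hp : p.Prime) (hq : q.Prime)
    (hpq : p ≠ q) (k : ℕ) (hkp : k.Prime) (hk : k ∣ p - 1)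
    (hk' : ¬ k ∣ q - 1) :
    ∃ y : (ZMod (p * q))ˣ, y ^ ((p - 1) * (q - 1) / k) ≠ 1 := by
  have hcop : Nat.Coprime p q := (Nat.coprime_primes hp hq).2 hpq
  have e : (ZMod (p * q))ˣ ≃* (ZMod p)ˣ × (ZMod q)ˣ :=
    (Units.mapEquiv (ZMod.chineseRemainder hcop).toMulEquiv).trans MulEquiv.prodUnits
  haveI : Fact p.Prime := ⟨hp⟩
  obtain ⟨g, hg⟩ := IsCyclic.exists_ofOrder_eq_natCard (α := (ZMod p)ˣ)
  have hcard : Nat.card (ZMod p)ˣ = p - 1 := by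
    simp [Nat.card_eq_fintype_card, ZMod.card_units_eq_totient, Nat.totient_prime hp]
  rw [hcard] at hg
  have hp2 := hp.two_le
  refine ⟨e.symm (g, 1), fun h => ?_⟩
  have hgm : g ^ ((p - 1) * (q - 1) / k) = 1 := by
    have := congrArg (fun z => (e z).1) h
    simpa using this
  have hdvd : (p - 1) ∣ (p - 1) * (q - 1) / k := hg ▸ (orderOf_dvd_of_pow_eq_one hgm : orderOf g ∣ _)
  obtain ⟨t, ht⟩ := hk
  have ht0 : 0 < t := by
    rcases Nat.eq_zero_or_pos t with h0 | h0
    · exfalso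
      have : p - 1 = 0 := by simp [ht, h0]
      omega
    · exact h0
  have hm : (p - 1) * (q - 1) / k = t * (q - 1) := by
    rw [ht, Nat.mul_assoc, Nat.mul_div_cancel_left _ hkp.pos]
  rw [hm, ht] at hdvd
  obtain ⟨c, hc⟩ := hdvd
  apply hk'
  refine ⟨c, ?_⟩
  have : t * (q - 1) = t * (k * c) := by rw [hc]; ring
  exact Nat.eq_of_mul_eq_mul_left ht0 this
end

section
/- For every natural number n ≥ 1, every natural number k, every unit y and u of ZMod n, and every natural number m, the pushforward of the uniform probability mass function on the finite group (ZMod n)ˣ under the map v ↦ y^m · (u·v)^k equals its pushforward under the map w ↦ y^m · w^k. In other words, a re-encryption of a Benaloh ciphertext E(u,m) with a uniformly random unit is distributed identically to a fresh encryption of m with a uniformly random unit. -/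
lemma uniform_map_mul {G : Type*} [Group G] [Fintype G] (u : G) :
    (PMF.uniformOfFintype G).map (fun v => u * v) = PMF.uniformOfFintype G := by
  ext a
  rw [PMF.map_apply]
  rw [tsum_eq_single (u⁻¹ * a) (by intro b hb; simp; intro h; exact absurd (by rw [h]; group) hb)]
  simp

/-- A re-encryption of a Benaloh ciphertext `E(u,m)` with a uniformly random
unit is distributed identically to a fresh encryption of `m` with a uniformly
random unit. -/
theorem benaloh_reencryption_uniform (n : ℕ) [NeZero n] (k : ℕ)
    (y u : (ZMod n)ˣ) (m : ℕ) :
    (PMF.uniformOfFintype (ZMod n)ˣ).map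
        (fun v : (ZMod n)ˣ => y ^ m * (u * v) ^ k) =
      (PMF.uniformOfFintype (ZMod n)ˣ).map
        (fun w : (ZMod n)ˣ => y ^ m * w ^ k) := by
  have := uniform_map_mul (G := (ZMod n)ˣ) u
  calc (PMF.uniformOfFintype (ZMod n)ˣ).map (fun v => y ^ m * (u * v) ^ k)
      = ((PMF.uniformOfFintype (ZMod n)ˣ).map (fun v => u * v)).map
          (fun w => y ^ m * w ^ k) := by rw [PMF.map_comp]; rfl
    _ = _ := by rw [this]
end

section
/- Let n ≥ 1 and k be natural numbers and let y, u be units of ZMod n. For every list L of pairs (v, b) with v a unit of ZMod n and b a natural number, and every natural number c, the left fold of the operation (z, (v,b)) ↦ z · y^b · v^k over L starting from y^c · u^k equals y^(c + S) · (u · P)^k, where S is the sum of the second components of L and P is the product of the first components of L. In other words, after any sequence of homomorphic counter increments and re-encryptions by honest users, the stored ciphertext is a Benaloh encryption of the initial counter plus the total number of increments. -/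
/-- After any sequence of homomorphic counter increments and re-encryptions by
honest users, the stored ciphertext is a Benaloh encryption of the initial
counter plus the total number of increments. -/
theorem benaloh_fold_increments (n : ℕ) (hn : 1 ≤ n) (k : ℕ)
    (y u : (ZMod n)ˣ) (L : List ((ZMod n)ˣ × ℕ)) (c : ℕ) :
    L.foldl (fun z p => z * y ^ p.2 * p.1 ^ k) (y ^ c * u ^ k) =
      y ^ (c + (L.map Prod.snd).sum) * (u * (L.map Prod.fst).prod) ^ k := by
  induction L generalizing c u with
  | nil => simp
  | cons p L ih =>
    simp only [List.foldl_cons, List.map_cons, List.sum_cons, List.prod_cons]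
    have : y ^ c * u ^ k * y ^ p.2 * p.1 ^ k = y ^ (c + p.2) * (u * p.1) ^ k := by
      simp [pow_add, mul_pow, mul_comm, mul_assoc, mul_left_comm]
    rw [this, ih, mul_assoc, add_assoc]
end

section
/- Let n ≥ 1 and k be natural numbers and let y, u be units of ZMod n. For every list L of triples (v, b, R) with v and R units of ZMod n and b a natural number, the left fold of the operation (z, (v,b,R)) ↦ z · y^b · v^k · R over L starting from u^k, multiplied by the inverse of the product of the third components of L, equals y^S · (u · P)^k, where S is the sum of the second components of L and P is the product of the first components of L. In other words, in snapshot ProfilR, after each of the contributing users applies her increment, re-encryption, and multiplicative mask R_i, unmasking the final ciphertext by the inverse of R = R_1⋯R_k yields a Benaloh encryption of the total number of increments. -/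
private lemma benaloh_aux (n k : ℕ) (y : (ZMod n)ˣ)
    (L : List ((ZMod n)ˣ × ℕ × (ZMod n)ˣ)) : ∀ a : (ZMod n)ˣ,
    L.foldl (fun z p => z * y ^ p.2.1 * p.1 ^ k * p.2.2) a =
      a * y ^ (L.map (fun p => p.2.1)).sum *
        ((L.map Prod.fst).prod) ^ k * (L.map (fun p => p.2.2)).prod := by
  induction L with
  | nil => intro a; simp
  | cons h t ih =>
    intro a
    simp only [List.foldl_cons, List.map_cons, List.sum_cons, List.prod_cons, ih]
    rw [pow_add, mul_pow]
    simp only [mul_assoc, mul_comm, mul_left_comm]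

/-- In snapshot ProfilR, after each contributing user applies her increment,
re-encryption, and multiplicative mask `Rᵢ`, unmasking the final ciphertext by
the inverse of `R = R₁⋯R_k` yields a Benaloh encryption of the total number of
increments. -/
theorem benaloh_snapshot_fold (n : ℕ) (hn : 1 ≤ n) (k : ℕ)
    (y u : (ZMod n)ˣ) (L : List ((ZMod n)ˣ × ℕ × (ZMod n)ˣ)) :
    (L.foldl (fun z p => z * y ^ p.2.1 * p.1 ^ k * p.2.2) (u ^ k)) *
        ((L.map (fun p => p.2.2)).prod)⁻¹ =
      y ^ (L.map (fun p => p.2.1)).sum *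
        (u * (L.map Prod.fst).prod) ^ k := by
  rw [benaloh_aux, mul_pow]
  group
  ac_rfl
end

section
/- Let F be a finite field, let k ≥ 1 and t < k be natural numbers, let x_1, …, x_t be pairwise distinct nonzero elements of F, let y_1, …, y_t be elements of F, and let s be any element of F. Then the set of polynomials f over F with degree strictly less than k satisfying f(0) = s and f(x_i) = y_i for all i = 1, …, t has cardinality |F|^(k−1−t). In particular, fewer than k shares of a Shamir secret sharing are consistent with every possible secret in exactly the same number of ways, so they reveal nothing about the secret. -/
open Polynomial Module

/-!
Adjoining the secret as the value at the extra node `0`, the admissible polynomials are exactly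
those of degree `< k` taking prescribed values at `t + 1` distinct nodes. Evaluation at these
nodes is a linear map from the `k`-dimensional space of polynomials of degree `< k` onto
`F^(t+1)`, surjective by Lagrange interpolation, so each of its fibres is a coset of a kernel of
dimension `k - (t + 1)`, whatever the secret.
-/

theorem LinearMap.natCard_preimage_singleton_of_surjective {K V W : Type*} [Field K]
    [AddCommGroup V] [Module K V] [FiniteDimensional K V] [AddCommGroup W] [Module K W]
    {φ : V →ₗ[K] W} (hφ : Function.Surjective φ) (w : W) :
    Nat.card (φ ⁻¹' {w}) = Nat.card K ^ (finrank K V - finrank K W) := by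
  have hrank := φ.finrank_range_add_finrank_ker
  rw [LinearMap.range_eq_top.2 hφ, finrank_top] at hrank
  calc Nat.card (φ ⁻¹' {w}) = Nat.card (LinearMap.ker φ) :=
        Nat.card_congr (φ.toAddMonoidHom.fiberEquivKerOfSurjective hφ w)
    _ = Nat.card K ^ (finrank K V - finrank K W) := by
        rw [Module.natCard_eq_pow_finrank (K := K), ← hrank, Nat.add_sub_cancel_left]

namespace Polynomial

variable {F ι : Type*} [Field F]

noncomputable def degreeLTEval (n : ℕ) (z : ι → F) : degreeLT F n →ₗ[F] ι → F :=
  LinearMap.pi fun i => (leval (z i)).comp (degreeLT F n).subtype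

theorem degreeLTEval_surjective [Fintype ι] {n : ℕ} {z : ι → F} (hz : Function.Injective z)
    (hn : Fintype.card ι ≤ n) : Function.Surjective (degreeLTEval n z) := by
  classical
  intro w
  have hzinj : Set.InjOn z (Finset.univ : Finset ι) := hz.injOn
  refine ⟨⟨Lagrange.interpolate Finset.univ z w, mem_degreeLT.2 ?_⟩, _root_.funext fun i => ?_⟩
  · exact (Lagrange.degree_interpolate_lt _ hzinj).trans_le (by exact_mod_cast hn)
  · exact Lagrange.eval_interpolate_at_node _ hzinj (Finset.mem_univ i)

theorem natCard_degree_lt_eval_eq [Fintype ι] {n : ℕ} {z : ι → F}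
    (hz : Function.Injective z) (hn : Fintype.card ι ≤ n) (w : ι → F) :
    Nat.card {f : F[X] // f.degree < n ∧ ∀ i, f.eval (z i) = w i} =
      Nat.card F ^ (n - Fintype.card ι) := by
  have e : {f : F[X] // f.degree < n ∧ ∀ i, f.eval (z i) = w i} ≃ degreeLTEval n z ⁻¹' {w} :=
    { toFun f := ⟨⟨f, mem_degreeLT.2 f.2.1⟩, (_root_.funext f.2.2 : degreeLTEval n z _ = w)⟩
      invFun f := ⟨f.1, mem_degreeLT.1 f.1.2, congrFun f.2⟩
      left_inv _ := rfl
      right_inv _ := rfl }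
  rw [Nat.card_congr e, LinearMap.natCard_preimage_singleton_of_surjective
    (degreeLTEval_surjective hz hn), (degreeLTEquiv F n).finrank_eq]
  simp

end Polynomial

theorem shamir_hiding_general (F : Type*) [Field F] [Fintype F] (k t : ℕ)
    (ht : t < k) (x : Fin t → F) (hx : Function.Injective x)
    (hx0 : ∀ i, x i ≠ 0) (y : Fin t → F) (s : F) :
    Nat.card {f : Polynomial F //
        f.degree < (k : ℕ) ∧ f.eval 0 = s ∧ ∀ i, f.eval (x i) = y i} =
      Fintype.card F ^ (k - 1 - t) := by
  have hz : Function.Injective (Fin.cons 0 x : Fin (t + 1) → F) :=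
    Fin.cons_injective_of_injective (fun ⟨i, hi⟩ => hx0 i hi) hx
  have hshares : ∀ f : F[X], (f.eval 0 = s ∧ ∀ i, f.eval (x i) = y i) ↔
      ∀ i, f.eval ((Fin.cons 0 x : Fin (t + 1) → F) i) = (Fin.cons s y : Fin (t + 1) → F) i :=
    fun f => by simp only [Fin.forall_fin_succ, Fin.cons_zero, Fin.cons_succ]
  simp_rw [hshares]
  rw [natCard_degree_lt_eval_eq hz (by simpa using ht), Nat.card_eq_fintype_card,
    Fintype.card_fin, Nat.sub_sub, Nat.add_comm 1 t]

/-- Shamir hiding: fewer than `k` shares are consistent with every possible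
secret in exactly `|F|^(k-1-t)` ways, so they reveal nothing about the secret. -/
theorem shamir_hiding (F : Type*) [Field F] [Fintype F] (k t : ℕ)
    (hk : 1 ≤ k) (ht : t < k) (x : Fin t → F) (hx : Function.Injective x)
    (hx0 : ∀ i, x i ≠ 0) (y : Fin t → F) (s : F) :
    Nat.card {f : Polynomial F //
        f.degree < (k : ℕ) ∧ f.eval 0 = s ∧ ∀ i, f.eval (x i) = y i} =
      Fintype.card F ^ (k - 1 - t) :=
  shamir_hiding_general F k t ht x hx hx0 y s
end
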